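/- Let α be a composition of n, let R_α^{E_0} be the ℂ-span of E_0 inside the free ℂ-vector space on SYRT(α), and let f : R_α^{E_0} → R_α^{E_0} be a ℂ-linear map commuting with all the linearly extended operators π_i (1 ≤ i ≤ n−1). Write f(T_sup) = Σ_{T ∈ E_0} a_T·T. If T' ∈ E_0 is such that there exists i with i ∈ Des(T') and i ∉ Des(T_sup), then a_{T'} = 0. -/

import Mathlib

open Classical

namespace YRS

/-- `α` is a composition of `n`: a list of positive integers summing to `n`. -/
def IsComposition (n : ℕ) (α : List ℕ) : Prop :=
  (∀ a ∈ α, 0 < a) ∧ α.sum = n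

/-- The cell `κ = (c, r)` (column `c`, row `r`, both 1-indexed, French notation)
belongs to the diagram `D(α)`. -/
def inDiagram (α : List ℕ) (κ : ℕ × ℕ) : Prop :=
  1 ≤ κ.2 ∧ κ.2 ≤ α.length ∧ 1 ≤ κ.1 ∧ κ.1 ≤ α.getD (κ.2 - 1) 0

/-- `T` is a standard Young row-strict composition tableau of shape `α` (with entries
`1,…,n`), modelled as a total function on cells that vanishes off the diagram. -/
def IsSYRT (n : ℕ) (α : List ℕ) (T : ℕ × ℕ → ℕ) : Prop :=
  (∀ κ, ¬ inDiagram α κ → T κ = 0) ∧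
  (∀ κ, inDiagram α κ → 1 ≤ T κ ∧ T κ ≤ n) ∧
  (∀ κ κ', inDiagram α κ → inDiagram α κ' → T κ = T κ' → κ = κ') ∧
  (∀ v, 1 ≤ v → v ≤ n → ∃ κ, inDiagram α κ ∧ T κ = v) ∧
  (∀ c r, inDiagram α (c, r) → inDiagram α (c + 1, r) → T (c, r) < T (c + 1, r)) ∧
  (∀ r r', inDiagram α (1, r) → inDiagram α (1, r') → r < r' → T (1, r) < T (1, r')) ∧
  (∀ c r r', r' < r → inDiagram α (c, r) → inDiagram α (c + 1, r') →
      T (c, r) < T (c + 1, r') → inDiagram α (c + 1, r) ∧ T (c + 1, r) < T (c + 1, r'))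

/-- The cell of `T` containing the entry `v` (junk value `(0,0)` if there is none). -/
noncomputable def cellOf (α : List ℕ) (T : ℕ × ℕ → ℕ) (v : ℕ) : ℕ × ℕ :=
  if h : ∃ κ, inDiagram α κ ∧ T κ = v then h.choose else (0, 0)

/-- The filling obtained from `T` by exchanging the entries `i` and `i+1`. -/
def swapFun (i : ℕ) (T : ℕ × ℕ → ℕ) : ℕ × ℕ → ℕ := fun κ =>
  if T κ = i then i + 1 else if T κ = i + 1 then i else T κ

/-- The 0-Hecke operator `π_i` at the level of fillings:
`some T` if `i+1` is weakly left of `i`; `none` (i.e. `0`) if `i+1` is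
right-adjacent to `i`; and `some (s_i T)` otherwise. -/
noncomputable def piFun (α : List ℕ) (i : ℕ) (T : ℕ × ℕ → ℕ) : Option (ℕ × ℕ → ℕ) :=
  if (cellOf α T (i + 1)).1 ≤ (cellOf α T i).1 then some T
  else if cellOf α T (i + 1) = ((cellOf α T i).1 + 1, (cellOf α T i).2) then none
  else some (swapFun i T)

/-- The descent set of `T`: entries `i` (with `1 ≤ i ≤ n-1`) such that `i+1` lies in a
column strictly to the right of the column of `i`. -/
def DesSet (n : ℕ) (α : List ℕ) (T : ℕ × ℕ → ℕ) : Set ℕ :=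
  {i | 1 ≤ i ∧ i < n ∧ (cellOf α T i).1 < (cellOf α T (i + 1)).1}

/-- `T ∼ T'`: in every column, the relative order (bottom to top) of the entries of `T`
agrees with that of `T'`. -/
def simRel (α : List ℕ) (T T' : ℕ × ℕ → ℕ) : Prop :=
  ∀ c r r', inDiagram α (c, r) → inDiagram α (c, r') →
    (T (c, r) < T (c, r') ↔ T' (c, r) < T' (c, r'))

/-- Entries of `T` increase from bottom to top in every column (membership in `E_0`). -/
def colsIncreasing (α : List ℕ) (T : ℕ × ℕ → ℕ) : Prop :=
  ∀ c r r', inDiagram α (c, r) → inDiagram α (c, r') → r < r' → T (c, r) < T (c, r')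

/-- `T` is a source tableau of its `∼`-equivalence class: no `T' ≠ T` in the class of `T`
satisfies `π_i(T') = T` for some `i`. -/
def IsSource (n : ℕ) (α : List ℕ) (T : ℕ × ℕ → ℕ) : Prop :=
  ¬ ∃ T', IsSYRT n α T' ∧ simRel α T' T ∧ T' ≠ T ∧
      ∃ i, 1 ≤ i ∧ i < n ∧ piFun α i T' = some T

/-- One step of the `π`-operators: `π_i(T) = S` (as a tableau) for some `i`. -/
def piStep (n : ℕ) (α : List ℕ) (T S : ℕ × ℕ → ℕ) : Prop :=
  ∃ i, 1 ≤ i ∧ i < n ∧ piFun α i T = some S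

/-- `T ⪯ S`: `S` is obtained from `T` by a (possibly empty) sequence of `π`-operators. -/
def preceq (n : ℕ) (α : List ℕ) : (ℕ × ℕ → ℕ) → (ℕ × ℕ → ℕ) → Prop :=
  Relation.ReflTransGen (piStep n α)

/-- Removable cell of `D(α)`: rightmost cell of the top row, or the rightmost cell of a
row of length at least 2 such that no higher row has exactly one fewer cell. -/
def Removable (α : List ℕ) (κ : ℕ × ℕ) : Prop :=
  inDiagram α κ ∧ κ.1 = α.getD (κ.2 - 1) 0 ∧
    (κ.2 = α.length ∨
      (2 ≤ α.getD (κ.2 - 1) 0 ∧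
        ∀ r, κ.2 < r → r ≤ α.length → α.getD (r - 1) 0 + 1 ≠ α.getD (κ.2 - 1) 0))

/-- A removable cell of `D(α)` containing the largest entry of `T` in its column. -/
def DistRemovable (α : List ℕ) (T : ℕ × ℕ → ℕ) (κ : ℕ × ℕ) : Prop :=
  Removable α κ ∧ ∀ r, inDiagram α (κ.1, r) → r ≠ κ.2 → T (κ.1, r) < T κ

/-- Simple composition: whenever `α_j ≥ α_i ≥ 2` with `i < j`, some `α_k` with
`i ≤ k ≤ j` equals `α_i - 1`. -/
def SimpleComp (α : List ℕ) : Prop :=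
  ∀ i j, 1 ≤ i → i < j → j ≤ α.length → 2 ≤ α.getD (i - 1) 0 →
    α.getD (i - 1) 0 ≤ α.getD (j - 1) 0 →
    ∃ k, i ≤ k ∧ k ≤ j ∧ α.getD (k - 1) 0 + 1 = α.getD (i - 1) 0

/-- Decrease the `i`-th part (1-indexed) of `α` by one, deleting it if it becomes `0`. -/
def reduceAt (α : List ℕ) (i : ℕ) : List ℕ :=
  if α.getD (i - 1) 0 = 1 then α.eraseIdx (i - 1)
  else α.set (i - 1) (α.getD (i - 1) 0 - 1)

/-- The number of columns of `D(α)`. -/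
def width (α : List ℕ) : ℕ := α.foldr max 0

/-- Boundary cell: a cell of the first column, or a cell with no cell of `D(α)` strictly
above it in its own column or the column immediately to the left. -/
def Boundary (α : List ℕ) (κ : ℕ × ℕ) : Prop :=
  inDiagram α κ ∧ (κ.1 = 1 ∨
    ∀ r, κ.2 < r → ¬ inDiagram α (κ.1, r) ∧ ¬ inDiagram α (κ.1 - 1, r))

/-- The boundary cells listed in order: up the first column, then rightwards (for each
column `c ≥ 2` there is at most one boundary cell). -/
noncomputable def boundaryList (α : List ℕ) : List (ℕ × ℕ) :=
  ((List.range α.length).map fun r => ((1 : ℕ), r + 1)) ++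
    ((List.range (width α)).filterMap fun c =>
      if h : ∃ r, Boundary α (c + 2, r) then some ((c + 2, h.choose) : ℕ × ℕ) else none)

/-- The highest cell of `D(α)` strictly below `κ` in the column immediately to the right
of `κ` that is not yet threaded (i.e. not in `S`), if any. -/
noncomputable def nextCell (α : List ℕ) (S : Finset (ℕ × ℕ)) (κ : ℕ × ℕ) :
    Option (ℕ × ℕ) :=
  if h : ∃ r, r < κ.2 ∧ inDiagram α (κ.1 + 1, r) ∧ (κ.1 + 1, r) ∉ S ∧
      ∀ r', r < r' → r' < κ.2 → inDiagram α (κ.1 + 1, r') → (κ.1 + 1, r') ∈ S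
  then some ((κ.1 + 1, h.choose) : ℕ × ℕ) else none

/-- The thread starting at `κ`, given the set `S` of already threaded cells
(`fuel` bounds the length). -/
noncomputable def threadAux (α : List ℕ) (S : Finset (ℕ × ℕ)) :
    ℕ → (ℕ × ℕ) → List (ℕ × ℕ)
  | 0, κ => [κ]
  | fuel + 1, κ =>
      κ ::
        (match nextCell α S κ with
          | none => []
          | some κ' => threadAux α S fuel κ')

/-- The threads of the given boundary cells, constructed iteratively. -/
noncomputable def threadsAux (α : List ℕ) :
    List (ℕ × ℕ) → Finset (ℕ × ℕ) → List (List (ℕ × ℕ))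
  | [], _ => []
  | κ :: rest, S =>
      threadAux α S (width α) κ ::
        threadsAux α rest (S ∪ (threadAux α S (width α) κ).toFinset)

/-- The threads of `D(α)`, in order. -/
noncomputable def threads (α : List ℕ) : List (List (ℕ × ℕ)) :=
  threadsAux α (boundaryList α) ∅

/-- Fill the threads with consecutive integers, each thread from its rightmost cell (the
last cell of the list) to its leftmost cell (the boundary cell). -/
noncomputable def fillAux : List (List (ℕ × ℕ)) → ℕ → (ℕ × ℕ) → ℕ
  | [], _, _ => 0
  | L :: rest, off, κ =>
      if κ ∈ L then off + L.length - L.idxOf κ else fillAux rest (off + L.length) κ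

/-- The tableau `T_sup`: the `k`-th thread is filled with the next `|L_k|` consecutive
integers, from right to left. -/
noncomputable def TsupFun (α : List ℕ) : ℕ × ℕ → ℕ :=
  fun κ => fillAux (threads α) 0 κ

/-- The row-by-row "superstandard" filling: row `r` gets the entries
`α_1 + ⋯ + α_{r-1} + 1, …, α_1 + ⋯ + α_r` from left to right. -/
noncomputable def rowFill (α : List ℕ) : ℕ × ℕ → ℕ :=
  fun κ => if inDiagram α κ then (α.take (κ.2 - 1)).sum + κ.1 else 0

/-- The type of standard Young row-strict composition tableaux of shape `α`. -/
def SYRTof (n : ℕ) (α : List ℕ) : Type :=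
  {T : ℕ × ℕ → ℕ // IsSYRT n α T}

/-- `π_i` applied to a basis vector of the free `ℂ`-vector space on `SYRT(α)`. -/
noncomputable def piVec (n : ℕ) (α : List ℕ) (i : ℕ) (T : SYRTof n α) :
    SYRTof n α →₀ ℂ :=
  match piFun α i T.val with
  | none => 0
  | some T' =>
      if h : IsSYRT n α T' then Finsupp.single (⟨T', h⟩ : SYRTof n α) 1 else 0

/-- The `ℂ`-linear extension of `π_i` to the free `ℂ`-vector space on `SYRT(α)`. -/
noncomputable def piOp (n : ℕ) (α : List ℕ) (i : ℕ) :
    (SYRTof n α →₀ ℂ) →ₗ[ℂ] (SYRTof n α →₀ ℂ) :=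
  Finsupp.lift (SYRTof n α →₀ ℂ) ℂ (SYRTof n α) (piVec n α i)

/-- The span `R_α^{E_0}` of the tableaux whose columns increase from bottom to top. -/
noncomputable def E0span (n : ℕ) (α : List ℕ) : Submodule ℂ (SYRTof n α →₀ ℂ) :=
  Submodule.span ℂ
    ((fun T : SYRTof n α => Finsupp.single T (1 : ℂ)) '' {T | colsIncreasing α T.val})

/-- Apply the operators `π_i` for `i` in the list `l` from left to right
(`piSeq α [i₁, i₂, …] T = ⋯ (π_{i₂} (π_{i₁} T))`), with `none` meaning `0`. -/
noncomputable def piSeq (α : List ℕ) (l : List ℕ) (T : ℕ × ℕ → ℕ) :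
    Option (ℕ × ℕ → ℕ) :=
  l.foldl (fun o i => o.bind (piFun α i)) (some T)

end YRS
namespace YRSAux
open YRS

variable {α : List ℕ} {S : Finset (ℕ × ℕ)}

theorem getD_le_width : ∀ (l : List ℕ) (i : ℕ), l.getD i 0 ≤ YRS.width l := by
  intro l
  induction l with
  | nil => intro i; simp [YRS.width]
  | cons a t ih =>
    intro i
    cases i with
    | zero => simp [YRS.width, List.foldr]
    | succ j =>
      simp only [List.getD_cons_succ, YRS.width, List.foldr]
      exact le_trans (ih j) (le_max_right _ _)

theorem diagram_col_le_width {κ : ℕ × ℕ} (h : inDiagram α κ) : κ.1 ≤ width α :=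
  le_trans h.2.2.2 (getD_le_width α _)

theorem diagram_left {c r : ℕ} (hc : 1 ≤ c) (h : inDiagram α (c + 1, r)) :
    inDiagram α (c, r) :=
  ⟨h.1, h.2.1, hc, le_trans (Nat.le_succ c) h.2.2.2⟩

/-- The defining property of the cell chosen by `nextCell`. -/
def NCond (α : List ℕ) (S : Finset (ℕ × ℕ)) (κ : ℕ × ℕ) (r : ℕ) : Prop :=
  r < κ.2 ∧ inDiagram α (κ.1 + 1, r) ∧ (κ.1 + 1, r) ∉ S ∧
    ∀ r', r < r' → r' < κ.2 → inDiagram α (κ.1 + 1, r') → (κ.1 + 1, r') ∈ S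

theorem NCond_unique {κ : ℕ × ℕ} {r r' : ℕ} (h : NCond α S κ r) (h' : NCond α S κ r') :
    r = r' := by
  rcases lt_trichotomy r r' with hlt | he | hgt
  · exact absurd (h.2.2.2 r' hlt h'.1 h'.2.1) h'.2.2.1
  · exact he
  · exact absurd (h'.2.2.2 r hgt h.1 h.2.1) h.2.2.1

theorem nextCell_eq_some_of {κ : ℕ × ℕ} {r : ℕ} (h : NCond α S κ r) :
    nextCell α S κ = some (κ.1 + 1, r) := by
  have hex : ∃ r, r < κ.2 ∧ inDiagram α (κ.1 + 1, r) ∧ (κ.1 + 1, r) ∉ S ∧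
      ∀ r', r < r' → r' < κ.2 → inDiagram α (κ.1 + 1, r') → (κ.1 + 1, r') ∈ S := ⟨r, h⟩
  rw [nextCell, dif_pos hex]
  have := hex.choose_spec
  have : NCond α S κ hex.choose := this
  rw [NCond_unique this h]

theorem nextCell_spec {κ κ' : ℕ × ℕ} (h : nextCell α S κ = some κ') :
    κ'.1 = κ.1 + 1 ∧ NCond α S κ κ'.2 := by
  rw [nextCell] at h
  split_ifs at h with hex
  · rw [Option.some_inj] at h
    subst h
    exact ⟨rfl, hex.choose_spec⟩

theorem nextCell_none_iff {κ : ℕ × ℕ} :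
    nextCell α S κ = none ↔ ∀ r, ¬ NCond α S κ r := by
  rw [nextCell]
  split_ifs with hex
  · simp only [false_iff]
    push_neg
    exact ⟨hex.choose, hex.choose_spec⟩
  · simp only [true_iff]
    intro r hr
    exact hex ⟨r, hr⟩

theorem threadAux_zero (κ : ℕ × ℕ) : threadAux α S 0 κ = [κ] := rfl

theorem threadAux_succ (fuel : ℕ) (κ : ℕ × ℕ) :
    threadAux α S (fuel + 1) κ =
      κ :: (match nextCell α S κ with
        | none => []
        | some κ' => threadAux α S fuel κ') := rfl

theorem threadAux_length_pos (fuel : ℕ) (κ : ℕ × ℕ) :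
    0 < (threadAux α S fuel κ).length := by
  cases fuel with
  | zero => simp [threadAux_zero]
  | succ f => rw [threadAux_succ]; simp

theorem threadAux_head (fuel : ℕ) (κ : ℕ × ℕ) :
    (threadAux α S fuel κ).getD 0 (0, 0) = κ := by
  cases fuel with
  | zero => simp [threadAux_zero]
  | succ f => rw [threadAux_succ]; simp

theorem threadAux_chain : ∀ (fuel : ℕ) (κ : ℕ × ℕ) (p : ℕ),
    p + 1 < (threadAux α S fuel κ).length →
    nextCell α S ((threadAux α S fuel κ).getD p (0, 0)) =
      some ((threadAux α S fuel κ).getD (p + 1) (0, 0)) := by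
  intro fuel
  induction fuel with
  | zero => intro κ p hp; rw [threadAux_zero] at hp; simp at hp
  | succ f ih =>
    intro κ p hp
    rcases hnc : nextCell α S κ with _ | κ''
    · rw [threadAux_succ] at hp ⊢
      rw [hnc] at hp
      simp at hp
    · rw [threadAux_succ] at hp ⊢
      rw [hnc] at hp ⊢
      cases p with
      | zero =>
        simp only [List.getD_cons_zero, List.getD_cons_succ]
        rw [threadAux_head]
        exact hnc
      | succ q =>
        simp only [List.getD_cons_succ]
        simp only [List.length_cons] at hp
        exact ih κ'' q (by omega)

theorem threadAux_col (fuel : ℕ) (κ : ℕ × ℕ) :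
    ∀ p, p < (threadAux α S fuel κ).length →
      ((threadAux α S fuel κ).getD p (0, 0)).1 = κ.1 + p := by
  intro p
  induction p with
  | zero => intro _; rw [threadAux_head]; omega
  | succ q ih =>
    intro hp
    have hq : q < (threadAux α S fuel κ).length := by omega
    have hch := threadAux_chain fuel κ q hp
    have := (nextCell_spec hch).1
    rw [this, ih hq]
    ring

theorem threadAux_mem_diagram (fuel : ℕ) (κ : ℕ × ℕ) (hκ : inDiagram α κ) :
    ∀ p, p < (threadAux α S fuel κ).length →
      inDiagram α ((threadAux α S fuel κ).getD p (0, 0)) := by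
  intro p hp
  cases p with
  | zero => rw [threadAux_head]; exact hκ
  | succ q =>
    have hch := threadAux_chain fuel κ q hp
    obtain ⟨hcol, hnc⟩ := nextCell_spec hch
    have : ((threadAux α S fuel κ).getD (q + 1) (0, 0)) =
        (((threadAux α S fuel κ).getD q (0, 0)).1 + 1,
          ((threadAux α S fuel κ).getD (q + 1) (0, 0)).2) :=
      Prod.ext hcol rfl
    rw [this]
    exact hnc.2.1

theorem threadAux_last : ∀ (fuel : ℕ) (κ : ℕ × ℕ), width α < κ.1 + fuel →
    nextCell α S
      ((threadAux α S fuel κ).getD ((threadAux α S fuel κ).length - 1) (0, 0)) = none := by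
  intro fuel
  induction fuel with
  | zero =>
    intro κ hw
    rw [threadAux_zero]
    simp only [List.length_singleton, Nat.sub_self, List.getD_cons_zero]
    rw [nextCell_none_iff]
    intro r hr
    have := diagram_col_le_width hr.2.1
    simp at this
    omega
  | succ f ih =>
    intro κ hw
    rcases hnc : nextCell α S κ with _ | κ''
    · rw [threadAux_succ, hnc]
      simpa using hnc
    · rw [threadAux_succ, hnc]
      have hpos := threadAux_length_pos (α := α) (S := S) f κ''
      have hlen : (κ :: threadAux α S f κ'').length - 1 =
          ((threadAux α S f κ'').length - 1) + 1 := by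
        simp only [List.length_cons]
        omega
      rw [hlen, List.getD_cons_succ]
      apply ih
      have := (nextCell_spec hnc).1
      omega

end YRSAux
namespace YRSAux
open YRS

variable {α : List ℕ}

/-- The phase-2 part of the boundary list. -/
noncomputable def P2 (α : List ℕ) : List (ℕ × ℕ) :=
  (List.range (width α)).filterMap fun c =>
    if h : ∃ r, Boundary α (c + 2, r) then some ((c + 2, h.choose) : ℕ × ℕ) else none

theorem boundaryList_eq :
    boundaryList α = ((List.range α.length).map fun r => ((1 : ℕ), r + 1)) ++ P2 α := rfl

theorem boundaryList_length :
    (boundaryList α).length = α.length + (P2 α).length := by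
  rw [boundaryList_eq]; simp

theorem B_phase1 {t : ℕ} (ht : t < α.length) :
    (boundaryList α).getD t (0, 0) = (1, t + 1) := by
  rw [boundaryList_eq, List.getD_append _ _ _ _ (by simpa using ht),
    List.getD_eq_getElem _ _ (by simpa using ht)]
  simp

theorem P2_mem {e : ℕ × ℕ} (he : e ∈ P2 α) : Boundary α e ∧ 2 ≤ e.1 := by
  rw [P2, List.mem_filterMap] at he
  obtain ⟨c0, _, hc0⟩ := he
  split_ifs at hc0 with h
  · rw [Option.some_inj] at hc0
    subst hc0
    exact ⟨h.choose_spec, by omega⟩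

theorem B_phase2 {t : ℕ} (ht1 : α.length ≤ t) (ht2 : t < (boundaryList α).length) :
    Boundary α ((boundaryList α).getD t (0, 0)) ∧
      2 ≤ ((boundaryList α).getD t (0, 0)).1 := by
  rw [boundaryList_eq, List.getD_append_right _ _ _ _ (by simpa using ht1)]
  apply P2_mem
  rw [boundaryList_length] at ht2
  have hlt : t - (((List.range α.length).map fun r => ((1 : ℕ), r + 1)).length) <
      (P2 α).length := by simp; omega
  rw [List.getD_eq_getElem _ _ hlt]
  exact List.getElem_mem _

theorem P2_pairwise : (P2 α).Pairwise (fun a b => a.1 < b.1) := by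
  apply List.Pairwise.filterMap _ _ (List.pairwise_lt_range (n := width α))
  intro a a' haa b hb b' hb'
  split_ifs at hb hb' with h h' <;> simp only [Option.mem_def, Option.some_inj] at hb hb' <;>
    first
      | (subst hb; subst hb'; simpa using haa)
      | exact absurd hb' (by simp)
      | exact absurd hb (by simp)

theorem B_phase2_mono {t t' : ℕ} (h1 : α.length ≤ t) (htt : t < t')
    (h2 : t' < (boundaryList α).length) :
    ((boundaryList α).getD t (0, 0)).1 < ((boundaryList α).getD t' (0, 0)).1 := by
  have hmap : ((List.range α.length).map fun r => ((1 : ℕ), r + 1)).length = α.length := by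
    simp
  rw [boundaryList_length] at h2
  rw [boundaryList_eq, List.getD_append_right _ _ _ _ (by omega),
    List.getD_append_right _ _ _ _ (by omega), hmap]
  rw [List.getD_eq_getElem _ _ (by omega), List.getD_eq_getElem _ _ (by omega)]
  exact List.pairwise_iff_getElem.mp P2_pairwise _ _ (by omega) (by omega) (by omega)

theorem B_col_mono {t t' : ℕ} (htt : t ≤ t') (h2 : t' < (boundaryList α).length) :
    ((boundaryList α).getD t (0, 0)).1 ≤ ((boundaryList α).getD t' (0, 0)).1 := by
  rcases eq_or_lt_of_le htt with rfl | hlt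
  · exact le_refl _
  by_cases ht : t < α.length
  · by_cases ht' : t' < α.length
    · rw [B_phase1 ht, B_phase1 ht']
    · rw [B_phase1 ht]
      have := (B_phase2 (le_of_not_gt ht') h2).2
      omega
  · exact le_of_lt (B_phase2_mono (le_of_not_gt ht) hlt h2)

theorem B_ne {t t' : ℕ} (htt : t < t') (h2 : t' < (boundaryList α).length) :
    (boundaryList α).getD t (0, 0) ≠ (boundaryList α).getD t' (0, 0) := by
  by_cases ht : t < α.length
  · by_cases ht' : t' < α.length
    · rw [B_phase1 ht, B_phase1 ht']
      intro h
      have := congrArg Prod.snd h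
      simp at this
      omega
    · rw [B_phase1 ht]
      have := (B_phase2 (le_of_not_gt ht') h2).2
      intro h
      rw [← h] at this
      simp at this
  · have := B_phase2_mono (le_of_not_gt ht) htt h2
    intro h
    rw [h] at this
    omega

theorem B_col_unique {t t' : ℕ} (ht : t < (boundaryList α).length)
    (ht' : t' < (boundaryList α).length)
    (hc : ((boundaryList α).getD t (0, 0)).1 = ((boundaryList α).getD t' (0, 0)).1)
    (hc2 : 2 ≤ ((boundaryList α).getD t (0, 0)).1) : t = t' := by
  have hph : α.length ≤ t := by
    by_contra h
    rw [B_phase1 (lt_of_not_ge h)] at hc2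
    simp at hc2
  have hph' : α.length ≤ t' := by
    by_contra h
    rw [B_phase1 (lt_of_not_ge h)] at hc
    rw [hc] at hc2
    simp at hc2
  rcases lt_trichotomy t t' with h | h | h
  · have := B_phase2_mono hph h ht'; omega
  · exact h
  · have := B_phase2_mono hph' h ht; omega

theorem B_diagram (hα : ∀ a ∈ α, 0 < a) {t : ℕ} (ht : t < (boundaryList α).length) :
    inDiagram α ((boundaryList α).getD t (0, 0)) := by
  by_cases h : t < α.length
  · rw [B_phase1 h]
    refine ⟨by omega, by simpa using h, le_refl 1, ?_⟩
    simp only [Nat.add_sub_cancel]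
    have : α.getD t 0 ∈ α := by
      rw [List.getD_eq_getElem _ _ h]
      exact List.getElem_mem _
    exact hα _ this
  · exact (B_phase2 (le_of_not_gt h) ht).1.1

theorem B_boundary_top {t : ℕ} (ht1 : α.length ≤ t) (ht2 : t < (boundaryList α).length)
    {ρ : ℕ} (hρ : ((boundaryList α).getD t (0, 0)).2 < ρ) :
    ¬ inDiagram α (((boundaryList α).getD t (0, 0)).1, ρ) ∧
      ¬ inDiagram α (((boundaryList α).getD t (0, 0)).1 - 1, ρ) := by
  obtain ⟨hb, hc2⟩ := B_phase2 ht1 ht2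
  rcases hb.2 with h1 | h2
  · omega
  · exact h2 ρ hρ

end YRSAux
namespace YRSAux
open YRS

variable {α : List ℕ}

theorem threadsAux_nil (S : Finset (ℕ × ℕ)) : threadsAux α [] S = [] := rfl

theorem threadsAux_cons (b : ℕ × ℕ) (rest : List (ℕ × ℕ)) (S : Finset (ℕ × ℕ)) :
    threadsAux α (b :: rest) S =
      threadAux α S (width α) b ::
        threadsAux α rest (S ∪ (threadAux α S (width α) b).toFinset) := rfl

theorem threadsAux_length : ∀ (bl : List (ℕ × ℕ)) (S : Finset (ℕ × ℕ)),
    (threadsAux α bl S).length = bl.length := by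
  intro bl
  induction bl with
  | nil => intro S; rfl
  | cons b rest ih => intro S; rw [threadsAux_cons]; simp [ih]

theorem threadsAux_spec : ∀ (bl : List (ℕ × ℕ)) (S : Finset (ℕ × ℕ)) (t : ℕ),
    t < bl.length →
    ∃ St : Finset (ℕ × ℕ),
      (∀ κ, κ ∈ St ↔ (κ ∈ S ∨ ∃ m, m < t ∧ κ ∈ (threadsAux α bl S).getD m [])) ∧
      (threadsAux α bl S).getD t [] = threadAux α St (width α) (bl.getD t (0, 0)) := by
  intro bl
  induction bl with
  | nil => intro S t ht; simp at ht
  | cons b rest ih =>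
    intro S t ht
    cases t with
    | zero =>
      refine ⟨S, fun κ => by simp, ?_⟩
      rw [threadsAux_cons]
      simp
    | succ t' =>
      simp only [List.length_cons] at ht
      obtain ⟨St, hiff, heq⟩ := ih (S ∪ (threadAux α S (width α) b).toFinset) t' (by omega)
      refine ⟨St, ?_, ?_⟩
      · intro κ
        rw [hiff κ]
        constructor
        · rintro (hS | ⟨m, hm, hmem⟩)
          · rcases Finset.mem_union.mp hS with h | h
            · exact Or.inl h
            · refine Or.inr ⟨0, by omega, ?_⟩
              rw [threadsAux_cons]
              simpa using List.mem_toFinset.mp h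
          · refine Or.inr ⟨m + 1, by omega, ?_⟩
            rw [threadsAux_cons]
            simpa using hmem
        · rintro (hS | ⟨m, hm, hmem⟩)
          · exact Or.inl (Finset.mem_union_left _ hS)
          · cases m with
            | zero =>
              rw [threadsAux_cons] at hmem
              simp only [List.getD_cons_zero] at hmem
              exact Or.inl (Finset.mem_union_right _ (List.mem_toFinset.mpr hmem))
            | succ m' =>
              refine Or.inr ⟨m', by omega, ?_⟩
              rw [threadsAux_cons] at hmem
              simpa using hmem
      · rw [threadsAux_cons]
        simpa using heq

theorem fillAux_nil (off : ℕ) (κ : ℕ × ℕ) : fillAux [] off κ = 0 := rfl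

theorem fillAux_cons (L : List (ℕ × ℕ)) (rest : List (List (ℕ × ℕ))) (off : ℕ) (κ : ℕ × ℕ) :
    fillAux (L :: rest) off κ =
      if κ ∈ L then off + L.length - L.idxOf κ else fillAux rest (off + L.length) κ := rfl

theorem fill_zero : ∀ (LS : List (List (ℕ × ℕ))) (off : ℕ) (κ : ℕ × ℕ),
    (∀ L ∈ LS, κ ∉ L) → fillAux LS off κ = 0 := by
  intro LS
  induction LS with
  | nil => intro off κ _; rfl
  | cons L rest ih =>
    intro off κ h
    rw [fillAux_cons, if_neg (h L (by simp))]
    exact ih _ _ fun L' hL' => h L' (by simp [hL'])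

theorem sum_take_mono : ∀ (l : List ℕ) (m m' : ℕ), m ≤ m' →
    (l.take m).sum ≤ (l.take m').sum := by
  intro l
  induction l with
  | nil => intro m m' _; simp
  | cons a t ih =>
    intro m m' h
    cases m with
    | zero => simp
    | succ q =>
      cases m' with
      | zero => omega
      | succ q' =>
        simp only [List.take_succ_cons, List.sum_cons]
        exact Nat.add_le_add_left (ih q q' (by omega)) a

theorem fill_le : ∀ (LS : List (List (ℕ × ℕ))) (off j : ℕ) (κ : ℕ × ℕ),
    j < LS.length → κ ∈ LS.getD j [] →
    fillAux LS off κ ≤ off + ((LS.take (j + 1)).map List.length).sum := by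
  intro LS
  induction LS with
  | nil => intro off j κ h; simp at h
  | cons L rest ih =>
    intro off j κ hj hmem
    rw [fillAux_cons]
    by_cases hL : κ ∈ L
    · rw [if_pos hL]
      simp only [List.take_succ_cons, List.map_cons, List.sum_cons]
      omega
    · rw [if_neg hL]
      cases j with
      | zero => simp only [List.getD_cons_zero] at hmem; exact absurd hmem hL
      | succ j' =>
        simp only [List.length_cons] at hj
        simp only [List.getD_cons_succ] at hmem
        have := ih (off + L.length) j' κ (by omega) hmem
        simp only [List.take_succ_cons, List.map_cons, List.sum_cons]
        omega

theorem indexOf_lt_of_mem : ∀ (L : List (ℕ × ℕ)) (κ : ℕ × ℕ), κ ∈ L → L.idxOf κ < L.length := by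
  intro L
  induction L with
  | nil => intro κ h; simp at h
  | cons a t ih =>
    intro κ h
    rw [List.idxOf_cons]
    by_cases ha : a = κ
    · simp [ha]
    · simp only [cond_eq_if, beq_iff_eq, if_neg ha, List.length_cons]
      have hm : κ ∈ t := by
        rcases List.mem_cons.mp h with h1 | h1
        · exact absurd h1.symm ha
        · exact h1
      have := ih κ hm
      omega

theorem fill_gt : ∀ (LS : List (List (ℕ × ℕ))) (off j : ℕ) (κ : ℕ × ℕ),
    j < LS.length → (∀ m, m < j → κ ∉ LS.getD m []) → κ ∈ LS.getD j [] →
    off + ((LS.take j).map List.length).sum < fillAux LS off κ := by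
  intro LS
  induction LS with
  | nil => intro off j κ h; simp at h
  | cons L rest ih =>
    intro off j κ hj hnot hmem
    rw [fillAux_cons]
    cases j with
    | zero =>
      simp only [List.getD_cons_zero] at hmem
      rw [if_pos hmem]
      have := indexOf_lt_of_mem L κ hmem
      simp only [List.take_zero, List.map_nil, List.sum_nil]
      omega
    | succ j' =>
      simp only [List.getD_cons_succ] at hmem
      have hL : κ ∉ L := hnot 0 (by omega)
      rw [if_neg hL]
      simp only [List.length_cons] at hj
      have := ih (off + L.length) j' κ (by omega)
        (fun m hm => hnot (m + 1) (by omega)) hmem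
      simp only [List.take_succ_cons, List.map_cons, List.sum_cons]
      omega

theorem fill_eq : ∀ (LS : List (List (ℕ × ℕ))) (off j : ℕ) (κ : ℕ × ℕ),
    j < LS.length → (∀ m, m < j → κ ∉ LS.getD m []) → κ ∈ LS.getD j [] →
    fillAux LS off κ =
      off + ((LS.take j).map List.length).sum + (LS.getD j []).length
        - (LS.getD j []).idxOf κ := by
  intro LS
  induction LS with
  | nil => intro off j κ h; simp at h
  | cons L rest ih =>
    intro off j κ hj hnot hmem
    rw [fillAux_cons]
    cases j with
    | zero =>
      simp only [List.getD_cons_zero] at hmem ⊢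
      rw [if_pos hmem]
      simp
    | succ j' =>
      simp only [List.getD_cons_succ] at hmem ⊢
      have hL : κ ∉ L := hnot 0 (by omega)
      rw [if_neg hL]
      simp only [List.length_cons] at hj
      rw [ih (off + L.length) j' κ (by omega) (fun m hm => hnot (m + 1) (by omega)) hmem]
      simp only [List.take_succ_cons, List.map_cons, List.sum_cons]
      omega

theorem indexOf_eq_of_getD : ∀ (L : List (ℕ × ℕ)) (p : ℕ) (κ : ℕ × ℕ),
    p < L.length → L.getD p (0, 0) = κ → (∀ q, q < p → L.getD q (0, 0) ≠ κ) →
    L.idxOf κ = p := by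
  intro L
  induction L with
  | nil => intro p κ h; simp at h
  | cons a t ih =>
    intro p κ hp hκ hq
    cases p with
    | zero =>
      simp only [List.getD_cons_zero] at hκ
      subst hκ
      simp [List.idxOf_cons]
    | succ p' =>
      have ha : a ≠ κ := by
        have := hq 0 (by omega)
        simpa using this
      rw [List.idxOf_cons, cond_eq_if, if_neg (by simpa using ha)]
      simp only [List.getD_cons_succ] at hκ
      simp only [List.length_cons] at hp
      rw [ih p' κ (by omega) hκ (fun q hq' => by
        have := hq (q + 1) (by omega)
        simpa using this)]

end YRSAux
namespace YRSAux
open YRS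

variable {α : List ℕ} {n : ℕ}

theorem getD_mem {L : List (ℕ × ℕ)} {p : ℕ} (hp : p < L.length) :
    L.getD p (0, 0) ∈ L := by
  rw [List.getD_eq_getElem _ _ hp]
  exact List.getElem_mem _

theorem mem_getD {L : List (ℕ × ℕ)} {κ : ℕ × ℕ} (h : κ ∈ L) :
    ∃ p, p < L.length ∧ L.getD p (0, 0) = κ := by
  obtain ⟨p, hp, he⟩ := List.mem_iff_getElem.mp h
  exact ⟨p, hp, by rw [List.getD_eq_getElem _ _ hp, he]⟩

theorem TL_len : (threads α).length = (boundaryList α).length :=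
  threadsAux_length _ _

theorem thread_spec {t : ℕ} (ht : t < (boundaryList α).length) :
    ∃ St : Finset (ℕ × ℕ),
      (∀ κ, κ ∈ St ↔ ∃ m, m < t ∧ κ ∈ (threads α).getD m []) ∧
      (threads α).getD t [] =
        threadAux α St (width α) ((boundaryList α).getD t (0, 0)) := by
  obtain ⟨St, h1, h2⟩ := threadsAux_spec (α := α) (boundaryList α) ∅ t ht
  exact ⟨St, fun κ => by simpa [threads] using h1 κ, h2⟩

theorem thread_len_pos {t : ℕ} (ht : t < (boundaryList α).length) :
    0 < ((threads α).getD t []).length := by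
  obtain ⟨St, _, h2⟩ := thread_spec ht
  rw [h2]
  exact threadAux_length_pos _ _

theorem thread_head {t : ℕ} (ht : t < (boundaryList α).length) :
    ((threads α).getD t []).getD 0 (0, 0) = (boundaryList α).getD t (0, 0) := by
  obtain ⟨St, _, h2⟩ := thread_spec ht
  rw [h2]
  exact threadAux_head _ _

theorem thread_col {t : ℕ} (ht : t < (boundaryList α).length) {p : ℕ}
    (hp : p < ((threads α).getD t []).length) :
    (((threads α).getD t []).getD p (0, 0)).1 = ((boundaryList α).getD t (0, 0)).1 + p := by
  obtain ⟨St, _, h2⟩ := thread_spec ht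
  rw [h2] at hp ⊢
  exact threadAux_col _ _ p hp

theorem thread_diag (hα : ∀ a ∈ α, 0 < a) {t : ℕ} (ht : t < (boundaryList α).length)
    {p : ℕ} (hp : p < ((threads α).getD t []).length) :
    inDiagram α (((threads α).getD t []).getD p (0, 0)) := by
  obtain ⟨St, _, h2⟩ := thread_spec ht
  rw [h2] at hp ⊢
  exact threadAux_mem_diagram _ _ (B_diagram hα ht) p hp

theorem thread_pred {t : ℕ} (ht : t < (boundaryList α).length) {p : ℕ}
    (hp : p + 1 < ((threads α).getD t []).length) :
    (((threads α).getD t []).getD (p + 1) (0, 0)).1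
        = (((threads α).getD t []).getD p (0, 0)).1 + 1 ∧
    (((threads α).getD t []).getD (p + 1) (0, 0)).2
        < (((threads α).getD t []).getD p (0, 0)).2 ∧
    (∀ m, m < t → ((threads α).getD t []).getD (p + 1) (0, 0) ∉ (threads α).getD m []) ∧
    (∀ y, (((threads α).getD t []).getD (p + 1) (0, 0)).2 < y →
      y < (((threads α).getD t []).getD p (0, 0)).2 →
      inDiagram α ((((threads α).getD t []).getD (p + 1) (0, 0)).1, y) →
      ∃ m, m < t ∧ ((((threads α).getD t []).getD (p + 1) (0, 0)).1, y) ∈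
        (threads α).getD m []) := by
  obtain ⟨St, h1, h2⟩ := thread_spec ht
  have hch := by
    rw [h2] at hp
    exact threadAux_chain (α := α) (S := St) (width α) _ p hp
  rw [← h2] at hch
  obtain ⟨hcol, hnc⟩ := nextCell_spec hch
  set pre := ((threads α).getD t []).getD p (0, 0)
  set cur := ((threads α).getD t []).getD (p + 1) (0, 0)
  have hcur : cur = (pre.1 + 1, cur.2) := Prod.ext hcol rfl
  refine ⟨hcol, hnc.1, ?_, ?_⟩
  · intro m hm hmem
    apply hnc.2.2.1
    rw [← hcur]
    exact (h1 cur).mpr ⟨m, hm, hmem⟩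
  · intro y hy1 hy2 hy3
    rw [hcur] at hy3 ⊢
    simp only at hy3 ⊢
    have := hnc.2.2.2 y hy1 hy2 hy3
    exact (h1 _).mp this

theorem thread_next (hα : ∀ a ∈ α, 0 < a) {t : ℕ} (ht : t < (boundaryList α).length)
    {p : ℕ} (hp : p < ((threads α).getD t []).length) :
    (p + 1 < ((threads α).getD t []).length) ∨
    (∀ x, x < (((threads α).getD t []).getD p (0, 0)).2 →
      inDiagram α ((((threads α).getD t []).getD p (0, 0)).1 + 1, x) →
      ∃ m, m < t ∧ ((((threads α).getD t []).getD p (0, 0)).1 + 1, x) ∈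
        (threads α).getD m []) := by
  by_cases hlast : p + 1 < ((threads α).getD t []).length
  · exact Or.inl hlast
  · right
    obtain ⟨St, h1, h2⟩ := thread_spec ht
    have hplen : p = ((threads α).getD t []).length - 1 := by omega
    have hnone : nextCell α St (((threads α).getD t []).getD p (0, 0)) = none := by
      rw [hplen, h2]
      apply threadAux_last
      have hbd := B_diagram hα ht
      have : 1 ≤ ((boundaryList α).getD t (0, 0)).1 := hbd.2.2.1
      omega
    rw [nextCell_none_iff] at hnone
    set pre := ((threads α).getD t []).getD p (0, 0)
    intro x hx hxd
    by_contra hcon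
    -- the set of unthreaded diagram cells below `pre` in the next column is nonempty
    classical
    set M := (Finset.range pre.2).filter
      (fun y => inDiagram α (pre.1 + 1, y) ∧ (pre.1 + 1, y) ∉ St) with hM
    have hxM : x ∈ M := by
      rw [hM, Finset.mem_filter, Finset.mem_range]
      refine ⟨hx, hxd, ?_⟩
      intro hmem
      exact hcon ((h1 _).mp hmem)
    have hMne : M.Nonempty := ⟨x, hxM⟩
    set y := M.max' hMne
    have hyM : y ∈ M := M.max'_mem hMne
    rw [hM, Finset.mem_filter, Finset.mem_range] at hyM
    apply hnone y
    refine ⟨hyM.1, hyM.2.1, hyM.2.2, ?_⟩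
    intro z hz1 hz2 hz3
    by_contra hz4
    have hzM : z ∈ M := by
      rw [hM, Finset.mem_filter, Finset.mem_range]
      exact ⟨hz2, hz3, hz4⟩
    have := M.le_max' z hzM
    omega

theorem thread_disjoint (hα : ∀ a ∈ α, 0 < a) :
    ∀ t t', t < t' → t' < (boundaryList α).length → ∀ κ,
      κ ∈ (threads α).getD t [] → κ ∈ (threads α).getD t' [] → False := by
  intro t t' htt ht' κ hmt hmt'
  have ht : t < (boundaryList α).length := by omega
  obtain ⟨p', hp', he'⟩ := mem_getD hmt'
  cases p' with
  | succ q' =>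
    -- κ is a non-head cell of thread t', hence not in any earlier thread
    have := (thread_pred ht' hp').2.2.1 t htt
    rw [he'] at this
    exact this hmt
  | zero =>
    -- κ is the head of thread t', a boundary cell
    rw [thread_head ht'] at he'
    obtain ⟨q, hq, heq⟩ := mem_getD hmt
    cases q with
    | zero =>
      rw [thread_head ht] at heq
      rw [← he'] at heq
      exact B_ne htt ht' heq
    | succ q0 =>
      -- κ occurs as a non-head cell of thread t with a predecessor above-left
      obtain ⟨hcol, hrow, _, _⟩ := thread_pred ht hq
      rw [heq] at hcol hrow
      set pre := ((threads α).getD t []).getD q0 (0, 0)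
      have hpreD : inDiagram α pre := thread_diag hα ht (by omega)
      -- the head is a phase-2 boundary cell since its column is ≥ 2
      have hc2 : 2 ≤ κ.1 := by
        have := hpreD.2.2.1
        omega
      have hph : α.length ≤ t' := by
        by_contra h
        have := B_phase1 (α := α) (lt_of_not_ge h)
        rw [this] at he'
        rw [← he'] at hc2
        simp at hc2
      have htop := (B_boundary_top hph ht' (ρ := pre.2) (by rw [he']; omega)).2
      rw [he'] at htop
      apply htop
      have h15 : κ.1 - 1 = pre.1 := by omega
      rw [h15, Prod.mk.eta]
      exact hpreD

theorem TsupFun_eq (κ : ℕ × ℕ) : TsupFun α κ = fillAux (threads α) 0 κ := rfl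

theorem covers (hTsup : IsSYRT n α (TsupFun α)) {κ : ℕ × ℕ} (hκ : inDiagram α κ) :
    ∃ t, t < (boundaryList α).length ∧ κ ∈ (threads α).getD t [] := by
  by_contra hcon
  push_neg at hcon
  have hz : TsupFun α κ = 0 := by
    rw [TsupFun_eq]
    apply fill_zero
    intro L hL
    obtain ⟨t, hts, he⟩ := List.mem_iff_getElem.mp hL
    have ht : t < (boundaryList α).length := by rw [← TL_len]; exact hts
    intro hmem
    apply hcon t ht
    rw [List.getD_eq_getElem _ _ hts, he]
    exact hmem
  have := (hTsup.2.1 κ hκ).1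
  omega

theorem val_lt (hα : ∀ a ∈ α, 0 < a) {t t' : ℕ} {κ κ' : ℕ × ℕ} (htt : t < t')
    (ht' : t' < (boundaryList α).length)
    (hm : κ ∈ (threads α).getD t []) (hm' : κ' ∈ (threads α).getD t' []) :
    TsupFun α κ < TsupFun α κ' := by
  have ht : t < (boundaryList α).length := by omega
  have htl : t < (threads α).length := by rw [TL_len]; exact ht
  have htl' : t' < (threads α).length := by rw [TL_len]; exact ht'
  have h1 : TsupFun α κ ≤ 0 + (((threads α).take (t + 1)).map List.length).sum := by
    rw [TsupFun_eq]
    exact fill_le _ 0 t κ htl hm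
  have h2 : 0 + (((threads α).take t').map List.length).sum < TsupFun α κ' := by
    rw [TsupFun_eq]
    apply fill_gt _ 0 t' κ' htl' _ hm'
    intro m hmlt hmem
    rcases lt_trichotomy m t' with h | h | h
    · exact thread_disjoint hα m t' h ht' κ' hmem hm'
    · omega
    · omega
  have h3 : (((threads α).take (t + 1)).map List.length).sum ≤
      (((threads α).take t').map List.length).sum := by
    rw [List.map_take, List.map_take]
    exact sum_take_mono _ (t + 1) t' (by omega)
  omega

theorem val_succ (hα : ∀ a ∈ α, 0 < a) {t : ℕ} (ht : t < (boundaryList α).length)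
    {p : ℕ} (hp : p + 1 < ((threads α).getD t []).length) :
    TsupFun α (((threads α).getD t []).getD (p + 1) (0, 0)) + 1 =
      TsupFun α (((threads α).getD t []).getD p (0, 0)) := by
  set L := (threads α).getD t [] with hL
  have hLL : ((threads α).getD t []).length = L.length := rfl
  have htl : t < (threads α).length := by rw [TL_len]; exact ht
  have hgne : ∀ q q', q < q' → q' < L.length → L.getD q (0, 0) ≠ L.getD q' (0, 0) := by
    intro q q' hqq hq' he
    have h1 := thread_col ht (p := q) (by omega)
    have h2 := thread_col ht (p := q') hq'
    rw [← hL] at h1 h2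
    rw [he, h2] at h1
    omega
  have hnotin : ∀ κ, κ ∈ L → ∀ m, m < t → κ ∉ (threads α).getD m [] := by
    intro κ hκ m hm hκ'
    exact thread_disjoint hα m t hm ht κ hκ' hκ
  have hidx1 : L.idxOf (L.getD p (0, 0)) = p :=
    indexOf_eq_of_getD L p _ (by omega) rfl (fun q hq => hgne q p hq (by omega))
  have hidx2 : L.idxOf (L.getD (p + 1) (0, 0)) = p + 1 :=
    indexOf_eq_of_getD L (p + 1) _ hp rfl (fun q hq => hgne q (p + 1) hq hp)
  have hm1 : L.getD p (0, 0) ∈ L := getD_mem (by omega)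
  have hm2 : L.getD (p + 1) (0, 0) ∈ L := getD_mem hp
  have he1 : TsupFun α (L.getD p (0, 0)) =
      0 + (((threads α).take t).map List.length).sum + L.length - p := by
    rw [TsupFun_eq, fill_eq _ 0 t _ htl (fun m hm => hnotin _ hm1 m hm) (by rw [← hL]; exact hm1),
      ← hL, hidx1]
  have he2 : TsupFun α (L.getD (p + 1) (0, 0)) =
      0 + (((threads α).take t).map List.length).sum + L.length - (p + 1) := by
    rw [TsupFun_eq, fill_eq _ 0 t _ htl (fun m hm => hnotin _ hm2 m hm) (by rw [← hL]; exact hm2),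
      ← hL, hidx2]
  rw [he1, he2]
  omega

end YRSAux
namespace YRSAux
open YRS

variable {α : List ℕ} {n : ℕ}

theorem colsIncreasing_Tsup' (hα : IsComposition n α) (hTsup : IsSYRT n α (TsupFun α)) :
    colsIncreasing α (TsupFun α) := by
  have hpos := hα.1
  have KEY : ∀ c v r r', inDiagram α (c, r) → inDiagram α (c, r') → r < r' →
      TsupFun α (c, r') = v → TsupFun α (c, r) < v := by
    intro c
    induction c using Nat.strong_induction_on with
    | _ c ihc =>
    intro v
    induction v using Nat.strong_induction_on with
    | _ v ihv =>
    intro r r' hA hB hrr hval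
    have hc1 : 1 ≤ c := hA.2.2.1
    by_cases hc : c = 1
    · subst hc
      have := hTsup.2.2.2.2.2.1 r r' hA hB hrr
      omega
    obtain ⟨c', rfl⟩ : ∃ c', c = c' + 1 := ⟨c - 1, by omega⟩
    have hc' : 1 ≤ c' := by omega
    by_contra hcon
    push_neg at hcon
    have hne : TsupFun α (c' + 1, r) ≠ v := by
      intro he
      have heq := hTsup.2.2.1 (c' + 1, r) (c' + 1, r') hA hB (by rw [he, hval])
      have := congrArg Prod.snd heq
      simp at this
      omega
    have hvA : v < TsupFun α (c' + 1, r) := by omega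
    obtain ⟨jA, hjA, hmA⟩ := covers hTsup hA
    obtain ⟨jB, hjB, hmB⟩ := covers hTsup hB
    obtain ⟨pA, hpA, heA⟩ := mem_getD hmA
    -- `A = (c'+1, r)` is not the head of its thread
    cases pA with
    | zero =>
      rw [thread_head hjA] at heA
      have hph : α.length ≤ jA := by
        by_contra h
        have hB1 := B_phase1 (α := α) (lt_of_not_ge h)
        rw [hB1] at heA
        have := congrArg Prod.fst heA
        simp at this
        omega
      have htop := (B_boundary_top hph hjA (ρ := r') (by rw [heA]; exact hrr)).1
      rw [heA] at htop
      exact htop hB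
    | succ pA0 =>
    obtain ⟨hcolA, hrowA, _, hbetA⟩ := thread_pred hjA hpA
    rw [heA] at hcolA hrowA
    set Am := ((threads α).getD jA []).getD pA0 (0, 0) with hAmdef
    have hAmD : inDiagram α Am := thread_diag hpos hjA (by omega)
    have hAmcol : Am.1 = c' := by
      have : c' + 1 = Am.1 + 1 := hcolA
      omega
    have hAmrow : r < Am.2 := hrowA
    have hAmeta : (c', Am.2) = Am := by
      rw [← hAmcol]
    have hvalAm : TsupFun α Am = TsupFun α (c' + 1, r) + 1 := by
      have h := val_succ hpos hjA hpA
      rw [heA] at h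
      rw [← hAmdef] at h
      omega
    -- the row rule at (c', r')
    have hC0D : inDiagram α (c', r') := diagram_left hc' hB
    have hC0v : TsupFun α (c', r') < v := by
      have := hTsup.2.2.2.2.1 c' r' hC0D hB
      omega
    obtain ⟨pB, hpB, heB⟩ := mem_getD hmB
    cases pB with
    | zero =>
      -- `B = (c'+1, r')` is the head of its thread, a boundary cell
      rw [thread_head hjB] at heB
      have hph : α.length ≤ jB := by
        by_contra h
        have hB1 := B_phase1 (α := α) (lt_of_not_ge h)
        rw [hB1] at heB
        have := congrArg Prod.fst heB
        simp at this
        omega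
      have hρA : Am.2 ≤ r' := by
        by_contra h
        have htop := (B_boundary_top hph hjB (ρ := Am.2) (by rw [heB]; simp; omega)).2
        rw [heB] at htop
        apply htop
        have h15 : ((c' + 1, r').1 : ℕ) - 1 = c' := by simp
        rw [h15, hAmeta]
        exact hAmD
      rcases eq_or_lt_of_le hρA with he | hlt
      · have : Am = (c', r') := by rw [← hAmeta, he]
        rw [this] at hvalAm
        omega
      · have hD : inDiagram α (c', Am.2) := by rw [hAmeta]; exact hAmD
        have hih := ihc c' (by omega) (TsupFun α (c', r')) Am.2 r' hD hC0D hlt rfl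
        rw [hAmeta] at hih
        omega
    | succ pB0 =>
    obtain ⟨hcolB, hrowB, _, _⟩ := thread_pred hjB hpB
    rw [heB] at hcolB hrowB
    set Bm := ((threads α).getD jB []).getD pB0 (0, 0) with hBmdef
    have hBmD : inDiagram α Bm := thread_diag hpos hjB (by omega)
    have hBmcol : Bm.1 = c' := by
      have : c' + 1 = Bm.1 + 1 := hcolB
      omega
    have hBmrow : r' < Bm.2 := hrowB
    have hBmeta : (c', Bm.2) = Bm := by rw [← hBmcol]
    have hvalBm : TsupFun α Bm = v + 1 := by
      have h := val_succ hpos hjB hpB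
      rw [heB] at h
      rw [← hBmdef] at h
      have h2 : TsupFun α (c' + 1, r') = v := hval
      omega
    have hArowB : Bm.2 < Am.2 := by
      rcases lt_trichotomy Am.2 Bm.2 with h | h | h
      · have hih := ihc c' (by omega) (TsupFun α Bm) Am.2 Bm.2
          (by rw [hAmeta]; exact hAmD) (by rw [hBmeta]; exact hBmD) h (by rw [hBmeta])
        rw [hAmeta] at hih
        omega
      · have : Am = Bm := by rw [← hAmeta, h, hBmeta]
        rw [this, hvalBm] at hvalAm
        omega
      · exact h
    obtain ⟨j2, hj2, hm2⟩ := covers hTsup hC0D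
    obtain ⟨p2, hp2, he2⟩ := mem_getD hm2
    by_cases hsame : j2 = jA
    · subst hsame
      have e1 := thread_col hj2 hp2
      have e2 := thread_col hj2 hpA
      rw [he2] at e1
      rw [heA] at e2
      have e1' : c' = ((boundaryList α).getD j2 (0, 0)).1 + p2 := e1
      have e2' : c' + 1 = ((boundaryList α).getD j2 (0, 0)).1 + (pA0 + 1) := e2
      have hpp : p2 = pA0 := by omega
      rw [hpp] at he2
      rw [← hAmdef] at he2
      rw [he2] at hvalAm
      omega
    · have hj2A : j2 < jA := by
        rcases lt_trichotomy j2 jA with h | h | h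
        · exact h
        · exact absurd h hsame
        · have := val_lt hpos h hj2 hmA hm2
          omega
      rcases thread_next hpos hj2 hp2 with hnext | hlast
      · set Ch := ((threads α).getD j2 []).getD (p2 + 1) (0, 0) with hChdef
        obtain ⟨hcolC, hrowC, _, hbetC⟩ := thread_pred hj2 hnext
        rw [he2] at hcolC hrowC hbetC
        have hChcol : Ch.1 = c' + 1 := by
          have : Ch.1 = (c', r').1 + 1 := hcolC
          simpa using this
        have hChrow : Ch.2 < r' := hrowC
        have hChD : inDiagram α Ch := thread_diag hpos hj2 hnext
        have hCheta : (c' + 1, Ch.2) = Ch := by rw [← hChcol]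
        have hvalCh : TsupFun α Ch < v := by
          have h := val_succ hpos hj2 hnext
          rw [he2] at h
          rw [← hChdef] at h
          omega
        rcases lt_trichotomy Ch.2 r with h | h | h
        · obtain ⟨m, hm, hmem⟩ := hbetC r h hrr (by rw [hChcol]; exact hA)
          rw [hChcol] at hmem
          exact thread_disjoint hpos m jA (by omega) hjA _ hmem hmA
        · have hCh : Ch = (c' + 1, r) := by rw [← hCheta, h]
          have hChmem : Ch ∈ (threads α).getD j2 [] := getD_mem hnext
          rw [hCh] at hChmem
          exact thread_disjoint hpos j2 jA hj2A hjA _ hChmem hmA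
        · have hChD' : inDiagram α (c' + 1, Ch.2) := by rw [hCheta]; exact hChD
          have hih := ihv (TsupFun α Ch) (by omega) r Ch.2 hA hChD' h (by rw [hCheta])
          omega
      · rw [he2] at hlast
        obtain ⟨m, hm, hmem⟩ := hlast r hrr hA
        exact thread_disjoint hpos m jA (by omega) hjA _ hmem hmA
  intro c r r' h1 h2 hrr
  exact KEY c (TsupFun α (c, r')) r r' h1 h2 hrr rfl

end YRSAux
namespace YRSAux

open YRS

variable {n : ℕ} {α : List ℕ}

theorem colsIncreasing_Tsup (hα : IsComposition n α) (hTsup : IsSYRT n α (TsupFun α)) :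
    colsIncreasing α (TsupFun α) := colsIncreasing_Tsup' hα hTsup

theorem swapFun_invol (i : ℕ) (T : ℕ × ℕ → ℕ) : swapFun i (swapFun i T) = T := by
  funext κ
  simp only [swapFun]
  by_cases h1 : T κ = i
  · simp [h1]
  · by_cases h2 : T κ = i + 1 <;> simp [h1, h2]

theorem cellOf_eq (hT : IsSYRT n α T) {κ : ℕ × ℕ} {v : ℕ} (hκ : inDiagram α κ)
    (hv : T κ = v) : cellOf α T v = κ := by
  have h : ∃ κ, inDiagram α κ ∧ T κ = v := ⟨κ, hκ, hv⟩
  rw [cellOf, dif_pos h]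
  exact hT.2.2.1 _ _ h.choose_spec.1 hκ (h.choose_spec.2.trans hv.symm)

/-- Key step: the coefficient of `T'` in `π_i` applied to any basis vector vanishes. -/
theorem piVec_apply_eq_zero (T' : SYRTof n α) (i : ℕ) (h1 : 1 ≤ i) (h2 : i < n)
    (hlt : (cellOf α T'.val i).1 < (cellOf α T'.val (i + 1)).1)
    (T : SYRTof n α) : piVec n α i T T' = 0 := by
  rcases hpi : piFun α i T.val with _ | g
  · simp only [piVec, hpi, Finsupp.coe_zero, Pi.zero_apply]
  · have hne : g ≠ T'.val := by
      intro hg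
      rw [piFun] at hpi
      split_ifs at hpi with hc1 hc2
      · -- g = T.val, weakly-left case
        rw [Option.some_inj] at hpi
        rw [hpi, hg] at hc1
        exact absurd hc1 (not_le.mpr hlt)
      · -- swap case
        rw [Option.some_inj] at hpi
        subst hpi
        -- T.val = swapFun i T'.val
        have hTval : T.val = swapFun i T'.val := by
          rw [← hg, swapFun_invol]
        obtain ⟨κ1, hκ1, hv1⟩ := T'.2.2.2.2.1 i h1 (le_of_lt h2)
        obtain ⟨κ2, hκ2, hv2⟩ := T'.2.2.2.2.1 (i + 1) (Nat.le_add_left 1 i) h2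
        have e1 : T.val κ2 = i := by
          rw [hTval, swapFun]
          have : T'.val κ2 ≠ i := by omega
          simp [this, hv2]
        have e2 : T.val κ1 = i + 1 := by
          rw [hTval, swapFun, hv1]
          simp
        have c1 : cellOf α T.val i = κ2 := cellOf_eq T.2 hκ2 e1
        have c2 : cellOf α T.val (i + 1) = κ1 := cellOf_eq T.2 hκ1 e2
        have d1 : cellOf α T'.val i = κ1 := cellOf_eq T'.2 hκ1 hv1
        have d2 : cellOf α T'.val (i + 1) = κ2 := cellOf_eq T'.2 hκ2 hv2
        rw [c1, c2] at hc1
        rw [d1, d2] at hlt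
        exact hc1 (le_of_lt hlt)
    simp only [piVec, hpi]
    split_ifs with hg
    · refine Finsupp.single_eq_of_ne' ?_
      intro he
      exact hne (congrArg Subtype.val he)
    · simp
end YRSAux
/-- Let `f` be a `ℂ`-linear map of `R_α^{E_0}` into itself commuting
with all `π_i`, and write `f(T_sup) = Σ a_T · T`.  If `T' ∈ E_0` has a descent that is
not a descent of `T_sup`, then `a_{T'} = 0`. -/
theorem stmt16 (n : ℕ) (α : List ℕ) (hα : YRS.IsComposition n α)
    (hTsup : YRS.IsSYRT n α (YRS.TsupFun α))
    (f : (YRS.SYRTof n α →₀ ℂ) →ₗ[ℂ] (YRS.SYRTof n α →₀ ℂ))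
    (hf1 : ∀ x ∈ YRS.E0span n α, f x ∈ YRS.E0span n α)
    (hf2 : ∀ i, 1 ≤ i → i < n → ∀ x ∈ YRS.E0span n α,
      f (YRS.piOp n α i x) = YRS.piOp n α i (f x))
    (T' : YRS.SYRTof n α) (hT' : YRS.colsIncreasing α T'.val)
    (i : ℕ) (hiDes : i ∈ YRS.DesSet n α T'.val)
    (hiNot : i ∉ YRS.DesSet n α (YRS.TsupFun α)) :
    f (Finsupp.single (⟨YRS.TsupFun α, hTsup⟩ : YRS.SYRTof n α) (1 : ℂ)) T' = 0 := by
  classical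
  obtain ⟨h1, h2, hlt⟩ := hiDes
  have hcol : YRS.colsIncreasing α (YRS.TsupFun α) := YRSAux.colsIncreasing_Tsup hα hTsup
  set Tsup' : YRS.SYRTof n α := ⟨YRS.TsupFun α, hTsup⟩ with hTsup'
  set x : YRS.SYRTof n α →₀ ℂ := Finsupp.single Tsup' 1 with hx
  have hmem : x ∈ YRS.E0span n α :=
    Submodule.subset_span ⟨Tsup', hcol, rfl⟩
  -- π_i fixes the basis vector of Tsup
  have hple : (YRS.cellOf α (YRS.TsupFun α) (i + 1)).1 ≤ (YRS.cellOf α (YRS.TsupFun α) i).1 := by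
    by_contra hcon
    exact hiNot ⟨h1, h2, not_le.mp hcon⟩
  have hpifun : YRS.piFun α i (YRS.TsupFun α) = some (YRS.TsupFun α) := by
    rw [YRS.piFun, if_pos hple]
  have hlift : ∀ (v : YRS.SYRTof n α →₀ ℂ),
      YRS.piOp n α i v = v.sum fun T b => b • YRS.piVec n α i T := by
    intro v
    rw [YRS.piOp, Finsupp.lift_apply]
  have hvec : YRS.piVec n α i Tsup' = x := by
    rw [YRS.piVec]
    simp only [hTsup', hpifun]
    rw [dif_pos hTsup]
  have hfix : YRS.piOp n α i x = x := by
    rw [hlift, hx, Finsupp.sum_single_index (by simp), one_smul, hvec]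
  have hfx : f x = YRS.piOp n α i (f x) := by
    conv_lhs => rw [← hfix]
    exact hf2 i h1 h2 x hmem
  have : f x T' = (YRS.piOp n α i (f x)) T' := by rw [← hfx]
  rw [this, hlift, Finsupp.sum_apply]
  rw [Finsupp.sum]
  apply Finset.sum_eq_zero
  intro T _
  rw [Finsupp.smul_apply, YRSAux.piVec_apply_eq_zero T' i h1 h2 hlt T, smul_zero]
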